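/- arXiv:2007.14193 — 2 statements merged into one kernel-verified Lean document; each statement's English description precedes it below -/
import Mathlib

section
/- Let α ∈ (0, 1) and let θ ∈ (π/2, π) satisfy cos θ / sin θ > −2/π. Then there exists a constant C > 0, depending only on θ and α, such that for every τ > 0, every κ ∈ (0, π/(τ sin θ)], and every z ∈ Γ^τ_{θ,κ}: |((1 − e^{−zτ})/τ)^α − z^α| ≤ C τ |z|^{α+1}, where both α-th powers are principal-branch complex powers. -/
/-!
Put `w = zτ`, so that `δ_τ(e^{-zτ}) = z u` with `u = (1 - e^{-w}) / w`.
If `|w| ≤ 1/2` then `|u - 1| ≤ |w|`, so `|arg u| ≤ π/6`; the cotangent condition forces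
`θ < 5π/6`, hence the principal powers multiply and `δ^α - z^α = z^α (u^α - 1)`, which the mean
value theorem on the disc `|u - 1| ≤ 1/2` bounds by `2 |z|^α |w|`.
If `1/2 < |w| ≤ π / sin θ`, both powers are `O(|z|^α)` and `|z|^α ≤ 2τ |z|^{α+1}`.
-/

open Real Complex Set

/-- The truncated contour `Γ^τ_{θ,κ}`. -/
def GammaTau (θ κ τ : ℝ) : Set ℂ :=
  {z : ℂ | (κ ≤ ‖z‖ ∧ ‖z‖ ≤ Real.pi / (τ * Real.sin θ) ∧ |z.arg| = θ) ∨
    (‖z‖ = κ ∧ |z.arg| ≤ θ)}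

namespace Complex

theorem mul_cpow_of_arg_add_mem_Ioc {x y : ℂ} (hx : x ≠ 0) (hy : y ≠ 0)
    (h : arg x + arg y ∈ Ioc (-π) π) (a : ℂ) : (x * y) ^ a = x ^ a * y ^ a := by
  rw [cpow_def_of_ne_zero (mul_ne_zero hx hy), cpow_def_of_ne_zero hx, cpow_def_of_ne_zero hy,
    log_mul hx hy h, add_mul, exp_add]

theorem abs_arg_le_arcsin_norm_sub_one {u : ℂ} (hu : ‖u - 1‖ < 1) :
    |arg u| ≤ arcsin ‖u - 1‖ := by
  set r := ‖u - 1‖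
  have hre : 0 < u.re := by
    have := (abs_le.mp (abs_re_le_norm (u - 1))).1
    simp only [sub_re, one_re] at this
    linarith
  have hu0 : 0 < ‖u‖ := norm_pos_iff.mpr fun h ↦ by simp [h] at hre
  have hr : r ^ 2 = (u.re - 1) ^ 2 + u.im ^ 2 := by
    rw [Complex.sq_norm, normSq_apply]
    simp only [sub_re, one_re, sub_im, one_im]
    ring
  have him : |u.im / ‖u‖| ≤ r := by
    rw [abs_div, abs_norm, div_le_iff₀ hu0]
    refine abs_le_of_sq_le_sq ?_ (by positivity)
    rw [mul_pow, Complex.sq_norm u, normSq_apply]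
    -- given `r ^ 2 = (re - 1) ^ 2 + im ^ 2`, `r ^ 2 * ‖u‖ ^ 2 - im ^ 2 = (re - 1 + r ^ 2) ^ 2`
    nlinarith [sq_nonneg (u.re - 1 + r ^ 2)]
  rw [arg_of_re_nonneg hre.le, abs_le, ← arcsin_neg]
  exact ⟨arcsin_le_arcsin (neg_le_of_abs_le him), arcsin_le_arcsin (le_of_abs_le him)⟩

theorem norm_cpow_sub_one_le {α : ℝ} (hα0 : 0 ≤ α) (hα1 : α ≤ 1) {u : ℂ}
    (hu : ‖u - 1‖ ≤ 1 / 2) : ‖u ^ (α : ℂ) - 1‖ ≤ 2 * ‖u - 1‖ := by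
  have hslit : ∀ v ∈ Metric.closedBall (1 : ℂ) (1 / 2), v ∈ slitPlane ∧ 1 / 2 ≤ ‖v‖ := by
    intro v hv
    rw [mem_closedBall_iff_norm] at hv
    have := abs_re_le_norm (v - 1)
    simp only [sub_re, one_re, abs_le] at this
    refine ⟨Or.inl (by linarith), ?_⟩
    have := norm_sub_norm_le (1 : ℂ) v
    rw [norm_one, norm_sub_rev] at this
    linarith
  have hderiv : ∀ v ∈ Metric.closedBall (1 : ℂ) (1 / 2), HasDerivWithinAt (fun x : ℂ ↦ x ^ (α : ℂ))
      (α * v ^ ((α : ℂ) - 1)) (Metric.closedBall 1 (1 / 2)) v :=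
    fun v hv ↦ (hasStrictDerivAt_cpow_const (hslit v hv).1).hasDerivAt.hasDerivWithinAt
  have hbound : ∀ v ∈ Metric.closedBall (1 : ℂ) (1 / 2), ‖(α : ℂ) * v ^ ((α : ℂ) - 1)‖ ≤ 2 := by
    intro v hv
    rw [norm_mul, norm_real, Real.norm_of_nonneg hα0, ← ofReal_one, ← ofReal_sub, norm_cpow_real]
    calc α * ‖v‖ ^ (α - 1) ≤ 1 * (1 / 2 : ℝ) ^ (-1 : ℝ) :=
          mul_le_mul hα1 ((rpow_le_rpow_of_nonpos (by norm_num) (hslit v hv).2 (by linarith)).trans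
            (rpow_le_rpow_of_exponent_ge (by norm_num) (by norm_num) (by linarith)))
            (by positivity) zero_le_one
      _ = 2 := by norm_num
  simpa using (convex_closedBall (1 : ℂ) (1 / 2)).norm_image_sub_le_of_norm_hasDerivWithin_le
    hderiv hbound (Metric.mem_closedBall_self (by norm_num)) (mem_closedBall_iff_norm.mpr hu)

end Complex

theorem norm_cpow_sub_cpow_le_of_norm_le {α : ℝ} (hα0 : 0 ≤ α) (hα1 : α ≤ 1) {K : ℝ} (hK : 1 ≤ K)
    {x z : ℂ} (hxz : ‖x‖ ≤ K * ‖z‖) : ‖x ^ (α : ℂ) - z ^ (α : ℂ)‖ ≤ (K + 1) * ‖z‖ ^ α := by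
  have hx : ‖x‖ ^ α ≤ K * ‖z‖ ^ α :=
    calc ‖x‖ ^ α ≤ (K * ‖z‖) ^ α := rpow_le_rpow (norm_nonneg x) hxz hα0
      _ = K ^ α * ‖z‖ ^ α := mul_rpow (by linarith) (norm_nonneg z)
      _ ≤ K * ‖z‖ ^ α := by gcongr; exact rpow_le_self_of_one_le hK hα1
  calc ‖x ^ (α : ℂ) - z ^ (α : ℂ)‖ ≤ ‖x‖ ^ α + ‖z‖ ^ α := by
        simpa only [norm_cpow_real] using norm_sub_le (x ^ (α : ℂ)) (z ^ (α : ℂ))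
    _ ≤ (K + 1) * ‖z‖ ^ α := by linarith

/-- `δ_τ(e^{-zτ})`, the symbol of the backward Euler method. -/
noncomputable def backwardEulerSymbol (τ : ℝ) (z : ℂ) : ℂ := (1 - exp (-(z * τ))) / τ

theorem backwardEulerSymbol_eq_mul (τ : ℝ) (z : ℂ) :
    backwardEulerSymbol τ z = z * ((1 - exp (-(z * τ))) / (z * τ)) := by
  rcases eq_or_ne z 0 with rfl | hz
  · simp [backwardEulerSymbol]
  · rw [backwardEulerSymbol, ← mul_div_assoc, mul_div_mul_left _ _ hz]

theorem norm_one_sub_exp_neg_div_sub_one_le {w : ℂ} (hw0 : w ≠ 0) (hw : ‖w‖ ≤ 1) :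
    ‖(1 - exp (-w)) / w - 1‖ ≤ ‖w‖ := by
  have hw0' : 0 < ‖w‖ := norm_pos_iff.mpr hw0
  have hsplit : (1 - exp (-w)) / w - 1 = -((exp (-w) - 1 - -w) / w) := by field_simp; ring
  rw [hsplit, norm_neg, norm_div, div_le_iff₀ hw0', ← sq]
  simpa using norm_exp_sub_one_sub_id_le (x := -w) (by simpa using hw)

theorem norm_backwardEulerSymbol_le {τ : ℝ} (hτ : 0 < τ) (z : ℂ) :
    ‖backwardEulerSymbol τ z‖ ≤ (1 + Real.exp (τ * ‖z‖)) / τ := by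
  unfold backwardEulerSymbol
  rw [norm_div, norm_real, Real.norm_of_nonneg hτ.le]
  gcongr
  calc ‖1 - exp (-(z * τ))‖ ≤ 1 + ‖exp (-(z * τ))‖ := by simpa using norm_sub_le 1 (exp (-(z * τ)))
    _ ≤ 1 + Real.exp (τ * ‖z‖) := by
        rw [norm_exp]
        gcongr
        calc (-(z * τ)).re ≤ ‖-(z * τ)‖ := re_le_norm _
          _ = τ * ‖z‖ := by rw [norm_neg, norm_mul, norm_real, Real.norm_of_nonneg hτ.le, mul_comm]

theorem norm_backwardEulerSymbol_cpow_sub_cpow_le_of_norm_le_half {α : ℝ} (hα0 : 0 ≤ α)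
    (hα1 : α ≤ 1) {τ : ℝ} (hτ : 0 < τ) {z : ℂ} (hz : z ≠ 0) (harg : |arg z| < 5 * π / 6)
    (hsmall : τ * ‖z‖ ≤ 1 / 2) :
    ‖backwardEulerSymbol τ z ^ (α : ℂ) - z ^ (α : ℂ)‖ ≤ 2 * τ * ‖z‖ ^ (α + 1) := by
  set u := (1 - exp (-(z * τ))) / (z * τ)
  have hδ : backwardEulerSymbol τ z = z * u := backwardEulerSymbol_eq_mul τ z
  have hw0 : z * τ ≠ 0 := mul_ne_zero hz (ofReal_ne_zero.mpr hτ.ne')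
  have hw : ‖z * τ‖ = τ * ‖z‖ := by
    rw [norm_mul, norm_real, Real.norm_of_nonneg hτ.le, mul_comm]
  have hu1 : ‖u - 1‖ ≤ τ * ‖z‖ := hw ▸ norm_one_sub_exp_neg_div_sub_one_le hw0 (by linarith)
  have hu0 : u ≠ 0 := fun h ↦ by simp only [h, zero_sub, norm_neg, norm_one] at hu1; linarith
  have harg_u : |arg u| ≤ π / 6 :=
    calc |arg u| ≤ arcsin ‖u - 1‖ := abs_arg_le_arcsin_norm_sub_one (by linarith)
      _ ≤ arcsin (1 / 2) := arcsin_le_arcsin (by linarith)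
      _ = π / 6 := by rw [← sin_pi_div_six, arcsin_sin] <;> linarith [pi_pos]
  have hsum : arg z + arg u ∈ Ioc (-π) π := by
    constructor <;> linarith [abs_le.mp harg_u, abs_lt.mp harg]
  calc ‖backwardEulerSymbol τ z ^ (α : ℂ) - z ^ (α : ℂ)‖ = ‖z‖ ^ α * ‖u ^ (α : ℂ) - 1‖ := by
        rw [hδ, mul_cpow_of_arg_add_mem_Ioc hz hu0 hsum, ← norm_cpow_real, ← norm_mul, mul_sub,
          mul_one]
    _ ≤ ‖z‖ ^ α * (2 * (τ * ‖z‖)) := by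
        gcongr
        exact (norm_cpow_sub_one_le hα0 hα1 (by linarith)).trans (by linarith)
    _ = 2 * τ * ‖z‖ ^ (α + 1) := by rw [rpow_add_one (norm_ne_zero_iff.mpr hz)]; ring

theorem norm_backwardEulerSymbol_cpow_sub_cpow_le_of_half_lt {α : ℝ} (hα0 : 0 ≤ α)
    (hα1 : α ≤ 1) {τ R : ℝ} (hτ : 0 < τ) {z : ℂ} (hbig : 1 / 2 < τ * ‖z‖) (hR : τ * ‖z‖ ≤ R) :
    ‖backwardEulerSymbol τ z ^ (α : ℂ) - z ^ (α : ℂ)‖ ≤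
      2 * (2 * (1 + Real.exp R) + 1) * τ * ‖z‖ ^ (α + 1) := by
  have hz : 0 < ‖z‖ := pos_of_mul_pos_right (by linarith) hτ.le
  have hδ : ‖backwardEulerSymbol τ z‖ ≤ 2 * (1 + Real.exp R) * ‖z‖ :=
    calc ‖backwardEulerSymbol τ z‖ ≤ (1 + Real.exp (τ * ‖z‖)) / τ := norm_backwardEulerSymbol_le hτ z
      _ ≤ (1 + Real.exp R) / τ := by gcongr
      _ ≤ 2 * (1 + Real.exp R) * ‖z‖ := by rw [div_le_iff₀ hτ]; nlinarith [Real.exp_pos R]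
  calc ‖backwardEulerSymbol τ z ^ (α : ℂ) - z ^ (α : ℂ)‖ ≤ (2 * (1 + Real.exp R) + 1) * ‖z‖ ^ α :=
        norm_cpow_sub_cpow_le_of_norm_le hα0 hα1 (by linarith [Real.exp_pos R]) hδ
    _ ≤ (2 * (1 + Real.exp R) + 1) * (2 * τ * ‖z‖ ^ (α + 1)) := by
        gcongr
        rw [rpow_add_one hz.ne']
        nlinarith [rpow_pos_of_pos hz α]
    _ = 2 * (2 * (1 + Real.exp R) + 1) * τ * ‖z‖ ^ (α + 1) := by ring

section GammaTau

variable {θ κ τ : ℝ} {z : ℂ}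

theorem ne_zero_of_mem_GammaTau (hκ : 0 < κ) (hz : z ∈ GammaTau θ κ τ) : z ≠ 0 := by
  rintro rfl
  rcases hz with ⟨h, -⟩ | ⟨h, -⟩ <;> simp only [norm_zero] at h <;> linarith

theorem abs_arg_le_of_mem_GammaTau (hz : z ∈ GammaTau θ κ τ) : |arg z| ≤ θ := by
  rcases hz with ⟨-, -, h⟩ | ⟨-, h⟩
  exacts [h.le, h]

theorem norm_le_of_mem_GammaTau (hκ : κ ≤ π / (τ * Real.sin θ)) (hz : z ∈ GammaTau θ κ τ) :
    ‖z‖ ≤ π / (τ * Real.sin θ) := by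
  rcases hz with ⟨-, h, -⟩ | ⟨h, -⟩
  exacts [h, h ▸ hκ]

end GammaTau

theorem lt_five_pi_div_six_of_cot_gt {θ : ℝ} (h0 : 0 < θ) (hπ : θ < π)
    (hcot : Real.cos θ / Real.sin θ > -2 / π) : θ < 5 * π / 6 := by
  have hsin : 0 < Real.sin θ := sin_pos_of_pos_of_lt_pi h0 hπ
  rw [gt_iff_lt, lt_div_iff₀ hsin] at hcot
  have hc : 2 / π < 2 / 3 := div_lt_div_of_pos_left two_pos three_pos pi_gt_three
  have hsqrt3 : 4 / 3 < √3 := lt_sqrt_of_sq_lt (by norm_num)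
  have hsin1 := mul_le_mul_of_nonneg_left (Real.sin_le_one θ) (by positivity : (0 : ℝ) ≤ 2 / π)
  have hcos : -(√3 / 2) < Real.cos θ := by
    rw [neg_div, neg_mul] at hcot
    linarith
  by_contra! h
  have := cos_le_cos_of_nonneg_of_le_pi (by positivity) hπ.le h
  rw [show 5 * π / 6 = π - π / 6 by ring, Real.cos_pi_sub, cos_pi_div_six] at this
  linarith

/-- Error of the backward Euler symbol raised to the power `α`:
`|δ_τ(e^{−zτ})^α − z^α| ≤ Cτ|z|^{α+1}` on the truncated contour, where the powers are
principal-branch complex powers. -/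
theorem delta_pow_minus_z_pow_bound
    (α : ℝ) (hα0 : 0 < α) (hα1 : α < 1)
    (θ : ℝ) (hθ1 : Real.pi / 2 < θ) (hθ2 : θ < Real.pi)
    (hθ3 : Real.cos θ / Real.sin θ > -2 / Real.pi) :
    ∃ C > (0 : ℝ),
      ∀ τ : ℝ, 0 < τ → ∀ κ : ℝ, 0 < κ → κ ≤ Real.pi / (τ * Real.sin θ) →
      ∀ z ∈ GammaTau θ κ τ,
        ‖((1 - Complex.exp (-(z * τ))) / τ) ^ (α : ℂ) - z ^ (α : ℂ)‖ ≤
          C * τ * ‖z‖ ^ (α + 1) := by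
  have hθ : θ < 5 * π / 6 := lt_five_pi_div_six_of_cot_gt (by linarith [pi_pos]) hθ2 hθ3
  have hsin : 0 < Real.sin θ := sin_pos_of_pos_of_lt_pi (by linarith [pi_pos]) hθ2
  refine ⟨2 * (2 * (1 + Real.exp (π / Real.sin θ)) + 1), by positivity,
    fun τ hτ κ hκ hκle z hz ↦ ?_⟩
  have hR : τ * ‖z‖ ≤ π / Real.sin θ :=
    calc τ * ‖z‖ ≤ τ * (π / (τ * Real.sin θ)) := by gcongr; exact norm_le_of_mem_GammaTau hκle hz
      _ = π / Real.sin θ := by field_simp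
  change ‖backwardEulerSymbol τ z ^ (α : ℂ) - z ^ (α : ℂ)‖ ≤ _
  rcases le_or_gt (τ * ‖z‖) (1 / 2) with hsmall | hbig
  · calc _ ≤ 2 * τ * ‖z‖ ^ (α + 1) := norm_backwardEulerSymbol_cpow_sub_cpow_le_of_norm_le_half
          hα0.le hα1.le hτ (ne_zero_of_mem_GammaTau hκ hz)
          ((abs_arg_le_of_mem_GammaTau hz).trans_lt hθ) hsmall
      _ ≤ _ := by gcongr; linarith [Real.exp_pos (π / Real.sin θ)]
  · exact norm_backwardEulerSymbol_cpow_sub_cpow_le_of_half_lt hα0.le hα1.le hτ hbig hR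
end

section
/- Let θ ∈ (π/2, π) satisfy cos θ / sin θ > −2/π. Then there exists a constant C > 0, depending only on θ, such that for every τ > 0, every κ ∈ (0, π/(τ sin θ)], and every z ∈ Γ^τ_{θ,κ}: e^{zτ} ≠ 1 and |e^{zτ} − 1 − zτ| / |e^{zτ} − 1| ≤ C τ |z|. -/
/-!
Put `w = zτ`. On the contour `‖w‖ ≤ π / sin θ`, and the angle condition forces `sin θ > 1/2`,
so `w` ranges over a closed disc of radius `R < 2π`. On that disc the entire function
`(eʷ - 1) / w` has no zeros, so by compactness it is bounded below by some `m > 0`, while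
`‖eʷ - 1 - w‖ ≤ M ‖w‖²`; hence the ratio is at most `(M / m) ‖w‖ = (M / m) τ ‖z‖`.
-/

open Real Complex Set

theorem Complex.exp_ne_one_of_ne_zero_of_norm_lt_two_pi {w : ℂ} (hw₀ : w ≠ 0)
    (hw : ‖w‖ < 2 * π) : Complex.exp w ≠ 1 := by
  rw [Ne, exp_eq_one_iff]
  rintro ⟨n, rfl⟩
  have hn : n ≠ 0 := by rintro rfl; simp at hw₀
  have : 2 * π * 1 ≤ 2 * π * |(n : ℝ)| :=
    mul_le_mul_of_nonneg_left (by exact_mod_cast Int.one_le_abs hn) (by positivity)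
  simp only [norm_mul, norm_intCast, norm_ofNat, Complex.norm_real, Complex.norm_I,
    Real.norm_of_nonneg pi_pos.le] at hw
  linarith

theorem Differentiable.dslope {E : Type*} [NormedAddCommGroup E] [NormedSpace ℂ E]
    [CompleteSpace E] {f : ℂ → E} (hf : Differentiable ℂ f) (c : ℂ) : Differentiable ℂ (dslope f c) :=
  differentiableOn_univ.1 <| (differentiableOn_dslope Filter.univ_mem).2 hf.differentiableOn

theorem exists_norm_sub_sub_smul_deriv_le_sq {E : Type*} [NormedAddCommGroup E]
    [NormedSpace ℂ E] [CompleteSpace E] {f : ℂ → E} (hf : Differentiable ℂ f) (R : ℝ) :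
    ∃ M, ∀ w : ℂ, ‖w‖ ≤ R → ‖f w - f 0 - w • deriv f 0‖ ≤ M * ‖w‖ ^ 2 := by
  set g := dslope (dslope f 0) 0
  obtain ⟨M, hM⟩ := (isCompact_closedBall (0 : ℂ) R).exists_bound_of_continuousOn
    ((hf.dslope 0).dslope 0).continuous.continuousOn (f := g)
  refine ⟨M, fun w hw => ?_⟩
  have hg : f w - f 0 - w • deriv f 0 = (w ^ 2) • g w := by
    have h₁ := sub_smul_dslope f 0 w
    have h₂ := sub_smul_dslope (dslope f 0) 0 w
    rw [sub_zero] at h₁ h₂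
    rw [dslope_same] at h₂
    rw [← h₁, ← smul_sub, ← h₂, sq, mul_smul]
  rw [hg, norm_smul, norm_pow, mul_comm]
  exact mul_le_mul_of_nonneg_right (hM w (mem_closedBall_zero_iff.2 hw)) (by positivity)

theorem exists_pos_mul_norm_le_norm_exp_sub_one {R : ℝ} (hR : R < 2 * π) :
    ∃ m > 0, ∀ w : ℂ, ‖w‖ ≤ R → m * ‖w‖ ≤ ‖Complex.exp w - 1‖ := by
  have hg : ∀ w ∈ Metric.closedBall (0 : ℂ) R, 0 < ‖dslope Complex.exp 0 w‖ := by
    intro w hw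
    rw [mem_closedBall_zero_iff] at hw
    rcases eq_or_ne w 0 with rfl | hw₀
    · simp [dslope_same]
    · rw [dslope_of_ne _ hw₀, slope_def_field, norm_pos_iff, Complex.exp_zero, sub_zero]
      exact div_ne_zero (sub_ne_zero.2 (exp_ne_one_of_ne_zero_of_norm_lt_two_pi hw₀
        (hw.trans_lt hR))) hw₀
  obtain ⟨m, hm, hmg⟩ := (isCompact_closedBall (0 : ℂ) R).exists_forall_le'
    (differentiable_exp.dslope 0).continuous.norm.continuousOn hg
  refine ⟨m, hm, fun w hw => ?_⟩
  have := sub_smul_dslope Complex.exp 0 w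
  rw [sub_zero, smul_eq_mul, Complex.exp_zero] at this
  rw [← this, norm_mul, mul_comm ‖w‖]
  exact mul_le_mul_of_nonneg_right (hmg w (mem_closedBall_zero_iff.2 hw)) (norm_nonneg w)

theorem exists_norm_exp_sub_one_sub_le_mul_norm_exp_sub_one {R : ℝ} (hR : R < 2 * π) :
    ∃ C > 0, ∀ w : ℂ, ‖w‖ ≤ R →
      ‖Complex.exp w - 1 - w‖ ≤ C * ‖w‖ * ‖Complex.exp w - 1‖ := by
  obtain ⟨M, hM⟩ := exists_norm_sub_sub_smul_deriv_le_sq differentiable_exp R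
  obtain ⟨m, hm, hmw⟩ := exists_pos_mul_norm_le_norm_exp_sub_one hR
  refine ⟨max M 1 / m, by positivity, fun w hw => ?_⟩
  have hTaylor := hM w hw
  rw [Complex.deriv_exp, Complex.exp_zero, smul_eq_mul, mul_one] at hTaylor
  calc ‖Complex.exp w - 1 - w‖ ≤ max M 1 * ‖w‖ ^ 2 :=
        hTaylor.trans (mul_le_mul_of_nonneg_right (le_max_left M 1) (by positivity))
    _ = max M 1 / m * ‖w‖ * (m * ‖w‖) := by field_simp
    _ ≤ max M 1 / m * ‖w‖ * ‖Complex.exp w - 1‖ := by gcongr; exact hmw w hw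

theorem one_half_lt_sin_of_cot_gt {θ : ℝ} (hθ₁ : π / 2 < θ) (hθ₂ : θ < π)
    (hθ : Real.cos θ / Real.sin θ > -2 / π) : 1 / 2 < Real.sin θ := by
  have hsin : 0 < Real.sin θ := sin_pos_of_pos_of_lt_pi (by linarith [pi_pos]) hθ₂
  have hcos : Real.cos θ < 0 := cos_neg_of_pi_div_two_lt_of_lt hθ₁ (by linarith)
  have hcot : -2 * Real.sin θ < π * Real.cos θ := by
    rw [gt_iff_lt, div_lt_div_iff₀ pi_pos hsin] at hθ
    linarith
  nlinarith [Real.sin_sq_add_cos_sq θ, pi_gt_three]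

theorem norm_mem_Ioc_of_mem_GammaTau {θ κ τ : ℝ} {z : ℂ} (hz : z ∈ GammaTau θ κ τ)
    (hκ : 0 < κ) (hκle : κ ≤ π / (τ * Real.sin θ)) :
    ‖z‖ ∈ Set.Ioc 0 (π / (τ * Real.sin θ)) := by
  rcases hz with ⟨h₁, h₂, -⟩ | ⟨rfl, -⟩
  exacts [⟨hκ.trans_le h₁, h₂⟩, ⟨hκ, hκle⟩]

/-- On the truncated contour `Γ^τ_{θ,κ}` with `θ ∈ (π/2, arccot(−2/π))` one has
`e^{zτ} ≠ 1` and `|e^{zτ} − 1 − zτ| / |e^{zτ} − 1| ≤ Cτ|z|`. -/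
theorem exp_taylor_remainder_ratio_bound
    (θ : ℝ) (hθ1 : Real.pi / 2 < θ) (hθ2 : θ < Real.pi)
    (hθ3 : Real.cos θ / Real.sin θ > -2 / Real.pi) :
    ∃ C > (0 : ℝ),
      ∀ τ : ℝ, 0 < τ → ∀ κ : ℝ, 0 < κ → κ ≤ Real.pi / (τ * Real.sin θ) →
      ∀ z ∈ GammaTau θ κ τ,
        Complex.exp (z * τ) ≠ 1 ∧
        ‖Complex.exp (z * τ) - 1 - z * τ‖ / ‖Complex.exp (z * τ) - 1‖ ≤
          C * τ * ‖z‖ := by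
  have hsin := one_half_lt_sin_of_cot_gt hθ1 hθ2 hθ3
  have hR : π / Real.sin θ < 2 * π := by
    rw [div_lt_iff₀ (by linarith)]
    nlinarith [pi_pos]
  obtain ⟨C, hC, hCw⟩ := exists_norm_exp_sub_one_sub_le_mul_norm_exp_sub_one hR
  refine ⟨C, hC, fun τ hτ κ hκ hκle z hz => ?_⟩
  obtain ⟨hz₀, hzle⟩ := norm_mem_Ioc_of_mem_GammaTau hz hκ hκle
  have hnorm : ‖z * τ‖ = τ * ‖z‖ := by
    rw [norm_mul, Complex.norm_real, Real.norm_of_nonneg hτ.le, mul_comm]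
  have hwR : ‖z * τ‖ ≤ π / Real.sin θ := by
    rw [hnorm, ← le_div_iff₀' hτ, div_div, mul_comm (Real.sin θ)]
    exact hzle
  have hne : Complex.exp (z * τ) ≠ 1 := exp_ne_one_of_ne_zero_of_norm_lt_two_pi
    (norm_pos_iff.1 (hnorm ▸ mul_pos hτ hz₀)) (hwR.trans_lt hR)
  refine ⟨hne, ?_⟩
  rw [div_le_iff₀ (norm_pos_iff.2 (sub_ne_zero.2 hne)), mul_assoc C, ← hnorm]
  exact hCw _ hwR
end
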